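/- Let S be a nonempty finite multiset of positive integers with n = |S| ≥ 4, m = max(S), all multiplicities equal to one, and suppose for all a < b < c in S that (m−a) ≥ (m−b) + (m−c) + n − 3. Then S contains no four distinct elements a < b, c < d with a + d = b + c. Consequently, any finite poset whose multiset of maximal chain cardinalities equals S has no splitting element. -/

import Mathlib

/-!
Gluing a maximal chain of `Iic x` to a maximal chain of `Ici x` gives a maximal chain of the
whole poset of cardinality `|C| + |D| - 1`. If `x` splits, choosing two chains on each side gives
four distinct maximal chains whose cardinalities `u₁₁, u₁₂, u₂₁, u₂₂` satisfy
`u₁₁ + u₂₂ = u₁₂ + u₂₁`; as `S` has no repeated element, the four are distinct, which is a forbidden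
additive quadruple. Sparseness rules such quadruples out: if `a < b < c`, `d ≤ m` and
`a + d = b + c`, then `(m - b) + (m - c) = (m - a) + (m - d)`, while sparseness with `|S| ≥ 4`
demands `(m - b) + (m - c) < m - a`.
-/

open scoped Classical in
/-- The finite set of maximal chains of a finite poset, as finsets. -/
noncomputable def maxChains (α : Type*) [Fintype α] [PartialOrder α] : Finset (Finset α) :=
  Finset.univ.filter (fun s : Finset α => IsMaxChain (· ≤ ·) (s : Set α))

/-- The multiset of cardinalities of the maximal chains of a finite poset. -/
noncomputable def mcMultiset (α : Type*) [Fintype α] [PartialOrder α] : Multiset ℕ :=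
  (maxChains α).val.map Finset.card

/-- `x` is a splitting element: the suborder of elements `≤ x` has more than one
maximal chain and the suborder of elements `≥ x` has more than one maximal chain. -/
def IsSplitting {α : Type*} [PartialOrder α] (x : α) : Prop :=
  (∃ C₁ C₂ : Set (Set.Iic x), IsMaxChain (· ≤ ·) C₁ ∧ IsMaxChain (· ≤ ·) C₂ ∧ C₁ ≠ C₂) ∧
  (∃ C₁ C₂ : Set (Set.Ici x), IsMaxChain (· ≤ ·) C₁ ∧ IsMaxChain (· ≤ ·) C₂ ∧ C₁ ≠ C₂)

section Glue

variable {α : Type*} [PartialOrder α] {x : α}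

theorem IsMaxChain.mem_of_image_subset {P : α → Prop} {C : Set (Subtype P)}
    (hC : IsMaxChain (· ≤ ·) C) {t : Set α} (ht : IsChain (· ≤ ·) t)
    (hCt : Subtype.val '' C ⊆ t) {y : Subtype P} (hy : (y : α) ∈ t) : y ∈ C := by
  have hchain : IsChain (· ≤ ·) (insert y C) :=
    (ht.preimage _ _ Subtype.val Subtype.val_injective fun _ _ h => h).mono
      (Set.insert_subset hy (Set.image_subset_iff.1 hCt))
  exact hC.2 hchain (Set.subset_insert _ _) ▸ Set.mem_insert _ _

def glue (C : Set (Set.Iic x)) (D : Set (Set.Ici x)) : Set α :=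
  Subtype.val '' C ∪ Subtype.val '' D

variable {C C' : Set (Set.Iic x)} {D D' : Set (Set.Ici x)}

theorem preimage_glue_left (hC : ⊤ ∈ C) : Subtype.val ⁻¹' glue C D = C := by
  ext z
  simp only [glue, Set.mem_preimage, Set.mem_union, Subtype.val_injective.mem_set_image]
  refine ⟨?_, Or.inl⟩
  rintro (hz | ⟨w, -, hw⟩)
  · exact hz
  · rwa [show z = ⊤ from Subtype.ext (le_antisymm z.2 (hw ▸ w.2))]

theorem preimage_glue_right (hD : ⊥ ∈ D) : Subtype.val ⁻¹' glue C D = D := by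
  ext z
  simp only [glue, Set.mem_preimage, Set.mem_union, Subtype.val_injective.mem_set_image]
  refine ⟨?_, Or.inr⟩
  rintro (⟨w, -, hw⟩ | hz)
  · rwa [show z = ⊥ from Subtype.ext (le_antisymm (hw ▸ w.2) z.2)]
  · exact hz

theorem glue_inj (hC : ⊤ ∈ C) (hC' : ⊤ ∈ C') (hD : ⊥ ∈ D) (hD' : ⊥ ∈ D') :
    glue C D = glue C' D' ↔ C = C' ∧ D = D' := by
  refine ⟨fun h => ⟨?_, ?_⟩, fun h => h.1 ▸ h.2 ▸ rfl⟩
  · rw [← preimage_glue_left (D := D) hC, h, preimage_glue_left hC']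
  · rw [← preimage_glue_right (C := C) hD, h, preimage_glue_right hD']

theorem IsMaxChain.glue (hC : IsMaxChain (· ≤ ·) C) (hD : IsMaxChain (· ≤ ·) D) :
    IsMaxChain (· ≤ ·) (glue C D) := by
  refine ⟨isChain_union.2 ⟨Subtype.mono_coe _ |>.isChain_image hC.1,
    Subtype.mono_coe _ |>.isChain_image hD.1, ?_⟩, fun t ht hsub => hsub.antisymm ?_⟩
  · rintro _ ⟨a, -, rfl⟩ _ ⟨b, -, rfl⟩ -
    exact Or.inl (a.2.trans b.2)
  · intro y hy
    have hxt : x ∈ t := hsub (Or.inl ⟨⊤, hC.top_mem, rfl⟩)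
    rcases ht.total hy hxt with h | h
    · exact Or.inl ⟨⟨y, h⟩, hC.mem_of_image_subset ht (Set.subset_union_left.trans hsub) hy, rfl⟩
    · exact Or.inr ⟨⟨y, h⟩, hD.mem_of_image_subset ht (Set.subset_union_right.trans hsub) hy, rfl⟩

theorem ncard_glue [Finite α] (hC : ⊤ ∈ C) (hD : ⊥ ∈ D) :
    (glue C D).ncard + 1 = C.ncard + D.ncard := by
  have hinter : Subtype.val '' C ∩ Subtype.val '' D = {x} := by
    ext y
    constructor
    · rintro ⟨⟨a, -, rfl⟩, ⟨b, -, hba⟩⟩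
      exact le_antisymm a.2 (hba ▸ b.2)
    · rintro rfl
      exact ⟨⟨⊤, hC, rfl⟩, ⟨⊥, hD, rfl⟩⟩
  have := Set.ncard_union_add_ncard_inter (Subtype.val '' C) (Subtype.val '' D)
  rwa [hinter, Set.ncard_singleton, Set.ncard_image_of_injective _ Subtype.val_injective,
    Set.ncard_image_of_injective _ Subtype.val_injective] at this

theorem IsSplitting.exists_isMaxChain_ncard_add_eq [Finite α] (hx : IsSplitting x) :
    ∃ E₁₁ E₁₂ E₂₁ E₂₂ : Set α, IsMaxChain (· ≤ ·) E₁₁ ∧ IsMaxChain (· ≤ ·) E₁₂ ∧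
      IsMaxChain (· ≤ ·) E₂₁ ∧ IsMaxChain (· ≤ ·) E₂₂ ∧
      E₁₁ ≠ E₁₂ ∧ E₁₁ ≠ E₂₁ ∧ E₁₁ ≠ E₂₂ ∧ E₁₂ ≠ E₂₁ ∧
      E₁₁.ncard + E₂₂.ncard = E₁₂.ncard + E₂₁.ncard := by
  obtain ⟨⟨C₁, C₂, hC₁, hC₂, hC⟩, ⟨D₁, D₂, hD₁, hD₂, hD⟩⟩ := hx
  have inj := fun {C C' D D'} (hC : IsMaxChain (· ≤ ·) C) (hC' : IsMaxChain (· ≤ ·) C')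
      (hD : IsMaxChain (· ≤ ·) D) (hD' : IsMaxChain (· ≤ ·) D') =>
    glue_inj (x := x) hC.top_mem hC'.top_mem hD.bot_mem hD'.bot_mem
  refine ⟨glue C₁ D₁, glue C₁ D₂, glue C₂ D₁, glue C₂ D₂, hC₁.glue hD₁, hC₁.glue hD₂,
    hC₂.glue hD₁, hC₂.glue hD₂, fun h => hD ((inj hC₁ hC₁ hD₁ hD₂).1 h).2,
    fun h => hC ((inj hC₁ hC₂ hD₁ hD₁).1 h).1, fun h => hC ((inj hC₁ hC₂ hD₁ hD₂).1 h).1,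
    fun h => hC ((inj hC₁ hC₂ hD₂ hD₁).1 h).1, ?_⟩
  have h₁₁ := ncard_glue hC₁.top_mem hD₁.bot_mem
  have h₁₂ := ncard_glue hC₁.top_mem hD₂.bot_mem
  have h₂₁ := ncard_glue hC₂.top_mem hD₁.bot_mem
  have h₂₂ := ncard_glue hC₂.top_mem hD₂.bot_mem
  omega

end Glue

section MaxChainCards

variable {α : Type*} [Fintype α] [PartialOrder α]

theorem mem_maxChains {s : Finset α} : s ∈ maxChains α ↔ IsMaxChain (· ≤ ·) (s : Set α) := by
  simp [maxChains]

theorem IsMaxChain.ncard_mem_mcMultiset {E : Set α} (hE : IsMaxChain (· ≤ ·) E) :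
    E.ncard ∈ mcMultiset α := by
  rw [Set.ncard_eq_toFinset_card E]
  exact Multiset.mem_map_of_mem _ (mem_maxChains.2 (by rwa [Set.Finite.coe_toFinset]))

theorem IsMaxChain.eq_of_ncard_eq (hnd : (mcMultiset α).Nodup) {E F : Set α}
    (hE : IsMaxChain (· ≤ ·) E) (hF : IsMaxChain (· ≤ ·) F) (h : E.ncard = F.ncard) : E = F := by
  rw [Set.ncard_eq_toFinset_card E, Set.ncard_eq_toFinset_card F] at h
  refine (Set.Finite.toFinset_inj (hs := Set.toFinite E) (ht := Set.toFinite F)).1 <|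
    Multiset.inj_on_of_nodup_map hnd _ ?_ _ ?_ h
  · exact mem_maxChains.2 (by rwa [Set.Finite.coe_toFinset])
  · exact mem_maxChains.2 (by rwa [Set.Finite.coe_toFinset])

end MaxChainCards

theorem no_additive_quadruple_of_sparse {S : Multiset ℕ} (hn : 4 ≤ Multiset.card S) {m : ℕ}
    (hmax : ∀ x ∈ S, x ≤ m)
    (hsparse : ∀ a ∈ S, ∀ b ∈ S, ∀ c ∈ S, a < b → b < c →
      (m - b) + (m - c) + Multiset.card S - 3 ≤ m - a) :
    ¬ ∃ a b c d, a ∈ S ∧ b ∈ S ∧ c ∈ S ∧ d ∈ S ∧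
        a < b ∧ a < c ∧ b < d ∧ c < d ∧ b ≠ c ∧ a + d = b + c := by
  rintro ⟨a, b, c, d, ha, hb, hc, hd, hab, hac, -, -, hbc, hsum⟩
  have := hmax d hd
  rcases hbc.lt_or_gt with h | h
  · have := hsparse a ha b hb c hc hab h
    omega
  · have := hsparse a ha c hc b hb hac h
    omega

theorem add_ne_add_of_no_additive_quadruple {S : Multiset ℕ}
    (hS : ¬ ∃ a b c d, a ∈ S ∧ b ∈ S ∧ c ∈ S ∧ d ∈ S ∧
        a < b ∧ a < c ∧ b < d ∧ c < d ∧ b ≠ c ∧ a + d = b + c)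
    {w x y z : ℕ} (hw : w ∈ S) (hx : x ∈ S) (hy : y ∈ S) (hz : z ∈ S)
    (hwx : w ≠ x) (hwy : w ≠ y) (hwz : w ≠ z) (hxy : x ≠ y) : w + z ≠ x + y := by
  intro hsum
  rcases hwx.lt_or_gt with h₁ | h₁ <;> rcases hwy.lt_or_gt with h₂ | h₂
  · exact hS ⟨w, x, y, z, hw, hx, hy, hz, by omega⟩
  · exact hS ⟨y, w, z, x, hy, hw, hz, hx, by omega⟩
  · exact hS ⟨x, w, z, y, hx, hw, hz, hy, by omega⟩
  · exact hS ⟨z, x, y, w, hz, hx, hy, hw, by omega⟩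

theorem sparse_no_splitting_general (S : Multiset ℕ) (hnd : S.Nodup)
    (hn : 4 ≤ Multiset.card S) (m : ℕ) (hmax : ∀ x ∈ S, x ≤ m)
    (hsparse : ∀ a ∈ S, ∀ b ∈ S, ∀ c ∈ S, a < b → b < c →
      (m - b) + (m - c) + Multiset.card S - 3 ≤ m - a) :
    (¬ ∃ a b c d, a ∈ S ∧ b ∈ S ∧ c ∈ S ∧ d ∈ S ∧
        a < b ∧ a < c ∧ b < d ∧ c < d ∧ b ≠ c ∧ a + d = b + c) ∧
    (∀ (α : Type) (i1 : Fintype α) (i2 : PartialOrder α),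
      @mcMultiset α i1 i2 = S → ∀ x : α, ¬ @IsSplitting α i2 x) := by
  have hquad := no_additive_quadruple_of_sparse hn hmax hsparse
  refine ⟨hquad, fun α _ _ hS x hx => ?_⟩
  subst hS
  obtain ⟨E₁₁, E₁₂, E₂₁, E₂₂, h₁₁, h₁₂, h₂₁, h₂₂, hne₁, hne₂, hne₃, hne₄, hsum⟩ :=
    hx.exists_isMaxChain_ncard_add_eq
  exact add_ne_add_of_no_additive_quadruple hquad h₁₁.ncard_mem_mcMultiset
    h₁₂.ncard_mem_mcMultiset h₂₁.ncard_mem_mcMultiset h₂₂.ncard_mem_mcMultiset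
    (mt (h₁₁.eq_of_ncard_eq hnd h₁₂) hne₁) (mt (h₁₁.eq_of_ncard_eq hnd h₂₁) hne₂)
    (mt (h₁₁.eq_of_ncard_eq hnd h₂₂) hne₃) (mt (h₁₂.eq_of_ncard_eq hnd h₂₁) hne₄) hsum

theorem sparse_no_splitting (S : Multiset ℕ) (hnd : S.Nodup) (hpos : ∀ x ∈ S, 0 < x)
    (hn : 4 ≤ Multiset.card S) (m : ℕ) (hm : m ∈ S) (hmax : ∀ x ∈ S, x ≤ m)
    (hsparse : ∀ a ∈ S, ∀ b ∈ S, ∀ c ∈ S, a < b → b < c →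
      (m - b) + (m - c) + Multiset.card S - 3 ≤ m - a) :
    (¬ ∃ a b c d, a ∈ S ∧ b ∈ S ∧ c ∈ S ∧ d ∈ S ∧
        a < b ∧ a < c ∧ b < d ∧ c < d ∧ b ≠ c ∧ a + d = b + c) ∧
    (∀ (α : Type) (i1 : Fintype α) (i2 : PartialOrder α),
      @mcMultiset α i1 i2 = S → ∀ x : α, ¬ @IsSplitting α i2 x) :=
  sparse_no_splitting_general S hnd hn m hmax hsparse
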